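/- For any connected graph G and any n ≥ 3, pd(G × C_n) ≤ pd(G) + 2, where C_n is the cycle on n vertices. -/

import Mathlib

open SimpleGraph

/-- Distance from a vertex to a set of vertices: `min {d(v,x) : x ∈ P}`. -/
noncomputable def distToSet {V : Type*} (G : SimpleGraph V) (v : V) (P : Set V) : ℕ :=
  sInf ((G.dist v) '' P)

/-- `S` is a resolving set of `G`. -/
def IsResolvingSet {V : Type*} (G : SimpleGraph V) (S : Set V) : Prop :=
  ∀ u v : V, u ≠ v → ∃ w ∈ S, G.dist u w ≠ G.dist v w

/-- The metric dimension of `G`. -/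
noncomputable def metricDim {V : Type*} (G : SimpleGraph V) : ℕ :=
  sInf {n | ∃ S : Finset V, S.card = n ∧ IsResolvingSet G ↑S}

/-- `Π` is a resolving partition of `G`: a partition of the vertex set such that
distinct vertices have distinct vectors of distances to the parts. -/
def IsResolvingPartition {V : Type*} (G : SimpleGraph V) (Pi : Set (Set V)) : Prop :=
  Setoid.IsPartition Pi ∧
    ∀ u v : V, u ≠ v → ∃ P ∈ Pi, distToSet G u P ≠ distToSet G v P

/-- The partition dimension of `G`. -/
noncomputable def partitionDim {V : Type*} (G : SimpleGraph V) : ℕ :=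
  sInf {n | ∃ Pi : Finset (Set V), Pi.card = n ∧ IsResolvingPartition G ↑Pi}

/-!
Distances in a box product add up coordinatewise. So if `Π` is a resolving partition of `G` and
`S` a resolving set of `H` missing some vertex, the partition `{P × Sᶜ : P ∈ Π} ∪ {V × {s} : s ∈ S}`
of `G □ H` is resolving: two vertices in the same `H`-layer are separated by some `P × Sᶜ`, since
their distances to it differ by their distances to `P`, while vertices in different layers are
separated by some `V × {s}`, the distance to which is the `H`-distance to `s`. For `H = Cₙ`, the
two adjacent vertices `0, 1` form a resolving set, as the distance formula on the cycle shows.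
-/

theorem Fin.val_sub_eq_ite {n : ℕ} (a b : Fin n) :
    (a - b).val = if b.val ≤ a.val then a.val - b.val else n + a.val - b.val := by
  split_ifs with h
  · exact Fin.coe_sub_iff_le.2 h
  · exact Fin.coe_sub_iff_lt.2 (not_le.1 h)

namespace SimpleGraph

variable {V W : Type*} {G : SimpleGraph V} {H : SimpleGraph W} {u v : V}

theorem Walk.le_add_length {f : V → ℕ} (hf : ∀ ⦃x y⦄, G.Adj x y → f x ≤ f y + 1) :
    ∀ {u v : V} (p : G.Walk u v), f u ≤ f v + p.length
  | _, _, .nil => le_rfl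
  | _, _, .cons h p => by
    have := p.le_add_length hf
    have := hf h
    rw [Walk.length_cons]
    omega

theorem Reachable.le_add_dist {f : V → ℕ} (hf : ∀ ⦃x y⦄, G.Adj x y → f x ≤ f y + 1)
    (h : G.Reachable u v) : f u ≤ f v + G.dist u v := by
  obtain ⟨p, hp⟩ := h.exists_walk_length_eq_dist
  exact hp ▸ p.le_add_length hf

theorem cycleGraph_dist_le_val_sub {n : ℕ} (u v : Fin (n + 2)) :
    (cycleGraph (n + 2)).dist u v ≤ (v - u).val := by
  induction h : (v - u).val generalizing v with
  | zero => simp [sub_eq_zero.1 (Fin.ext h : v - u = 0)]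
  | succ k ih =>
    have hadj : (cycleGraph (n + 2)).Adj (v - 1) v := cycleGraph_adj.2 (Or.inr (sub_sub_cancel v 1))
    have hk : (v - 1 - u).val = k := by
      rw [sub_right_comm, Fin.val_sub_eq_ite, Fin.val_one, h]
      split_ifs <;> omega
    calc (cycleGraph (n + 2)).dist u v
        ≤ (cycleGraph (n + 2)).dist u (v - 1) + (cycleGraph (n + 2)).dist (v - 1) v :=
          cycleGraph_connected.dist_triangle
      _ ≤ k + 1 := by rw [dist_eq_one_iff_adj.2 hadj]; exact Nat.add_le_add_right (ih _ hk) 1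

theorem cycleGraph_dist {n : ℕ} (u v : Fin (n + 2)) :
    (cycleGraph (n + 2)).dist u v =
      min (u.val.dist v.val) (n + 2 - u.val.dist v.val) := by
  have huv := cycleGraph_dist_le_val_sub u v
  have hvu := cycleGraph_dist_le_val_sub v u
  rw [dist_comm] at hvu
  refine le_antisymm ?_ ?_
  · rw [Fin.val_sub_eq_ite] at huv hvu
    unfold Nat.dist
    split_ifs at huv hvu <;> omega
  · -- the cycle distance to `v` changes by at most one along an edge
    have hf : ∀ ⦃x y : Fin (n + 2)⦄, (cycleGraph (n + 2)).Adj x y →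
        min (x.val.dist v.val) (n + 2 - x.val.dist v.val) ≤
          min (y.val.dist v.val) (n + 2 - y.val.dist v.val) + 1 := by
      intro x y hxy
      rw [cycleGraph_adj', Fin.val_sub_eq_ite, Fin.val_sub_eq_ite y] at hxy
      unfold Nat.dist
      split_ifs at hxy <;> omega
    simpa using (cycleGraph_connected.preconnected u v).le_add_dist hf

theorem cycleGraph_isResolvingSet_zero_one (n : ℕ) :
    IsResolvingSet (cycleGraph (n + 2)) {0, 1} := by
  intro u v huv
  by_contra! h
  have h0 := h 0 (by simp)
  have h1 := h 1 (by simp)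
  simp only [cycleGraph_dist, Fin.val_zero, Fin.val_one, Nat.dist] at h0 h1
  have := Fin.val_ne_of_ne huv
  omega

theorem dist_boxProd {x y : V × W} (h₁ : G.Reachable x.1 y.1) (h₂ : H.Reachable x.2 y.2) :
    (G □ H).dist x y = G.dist x.1 y.1 + H.dist x.2 y.2 := by
  have h : (G □ H).Reachable x y := reachable_boxProd.2 ⟨h₁, h₂⟩
  rw [← Nat.cast_inj (R := ℕ∞), Nat.cast_add, h.coe_dist_eq_edist, h₁.coe_dist_eq_edist,
    h₂.coe_dist_eq_edist, edist_boxProd]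

end SimpleGraph

section DistToSet

variable {V W : Type*} {G : SimpleGraph V} {H : SimpleGraph W}

theorem distToSet_singleton (v w : V) : distToSet G v {w} = G.dist v w := by
  simp [distToSet]

theorem distToSet_univ (v : V) : distToSet G v Set.univ = 0 :=
  Nat.eq_zero_of_le_zero (Nat.sInf_le ⟨v, trivial, dist_self⟩)

theorem distToSet_prod (hG : G.Preconnected) (hH : H.Preconnected) {A : Set V} {B : Set W}
    (hA : A.Nonempty) (hB : B.Nonempty) (g : V) (h : W) :
    distToSet (G □ H) (g, h) (A ×ˢ B) = distToSet G g A + distToSet H h B := by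
  unfold distToSet
  refine le_antisymm ?_ ?_
  · obtain ⟨a, ha, hda⟩ := Nat.sInf_mem (hA.image (G.dist g))
    obtain ⟨b, hb, hdb⟩ := Nat.sInf_mem (hB.image (H.dist h))
    rw [← hda, ← hdb]
    exact Nat.sInf_le ⟨(a, b), ⟨ha, hb⟩, dist_boxProd (hG _ _) (hH _ _)⟩
  · obtain ⟨p, hp, hdp⟩ := Nat.sInf_mem ((hA.prod hB).image ((G □ H).dist (g, h)))
    rw [← hdp, dist_boxProd (hG _ _) (hH _ _)]
    exact Nat.add_le_add (Nat.sInf_le ⟨p.1, hp.1, rfl⟩) (Nat.sInf_le ⟨p.2, hp.2, rfl⟩)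

theorem distToSet_univ_prod_singleton (hG : G.Connected) (hH : H.Preconnected) (g : V) (h s : W) :
    distToSet (G □ H) (g, h) (Set.univ ×ˢ {s}) = H.dist h s := by
  have : Nonempty V := hG.nonempty
  rw [distToSet_prod hG.preconnected hH Set.univ_nonempty (Set.singleton_nonempty s),
    distToSet_univ, distToSet_singleton, zero_add]

end DistToSet

section Partition

variable {V W : Type*} {G : SimpleGraph V} {H : SimpleGraph W}

def prodPartition (Pi : Set (Set V)) (S : Set W) : Set (Set (V × W)) :=
  (· ×ˢ Sᶜ) '' Pi ∪ (fun s => Set.univ ×ˢ {s}) '' S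

theorem Setoid.IsPartition.prodPartition [Nonempty V] {Pi : Set (Set V)}
    (hPi : Setoid.IsPartition Pi) {S : Set W} (hS : Sᶜ.Nonempty) :
    Setoid.IsPartition (prodPartition Pi S) := by
  refine ⟨?_, fun ⟨g, h⟩ => ?_⟩
  · rintro (⟨P, hP, hPS⟩ | ⟨s, -, hs⟩)
    · exact ((Setoid.nonempty_of_mem_partition hPi hP).prod hS).ne_empty hPS
    · exact (Set.univ_nonempty.prod (Set.singleton_nonempty s)).ne_empty hs
  by_cases hh : h ∈ S
  · refine ⟨Set.univ ×ˢ {h}, ⟨Or.inr ⟨h, hh, rfl⟩, by simp⟩, ?_⟩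
    rintro _ ⟨⟨P, -, rfl⟩ | ⟨s, -, rfl⟩, hgh⟩
    · exact absurd hh hgh.2
    · obtain ⟨-, rfl⟩ := hgh
      rfl
  · obtain ⟨P, ⟨hP, hgP⟩, hPuniq⟩ := hPi.2 g
    refine ⟨P ×ˢ Sᶜ, ⟨Or.inl ⟨P, hP, rfl⟩, hgP, hh⟩, ?_⟩
    rintro _ ⟨⟨P', hP', rfl⟩ | ⟨s, hs, rfl⟩, hgh⟩
    · rw [hPuniq P' ⟨hP', hgh.1⟩]
    · obtain ⟨-, rfl⟩ := hgh
      exact absurd hs hh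

theorem IsResolvingPartition.boxProd (hG : G.Connected) (hH : H.Preconnected)
    {Pi : Set (Set V)} (hPi : IsResolvingPartition G Pi) {S : Set W}
    (hS : IsResolvingSet H S) (hSc : Sᶜ.Nonempty) :
    IsResolvingPartition (G □ H) (prodPartition Pi S) := by
  have : Nonempty V := hG.nonempty
  refine ⟨hPi.1.prodPartition hSc, ?_⟩
  rintro ⟨g, h⟩ ⟨g', h'⟩ hne
  obtain rfl | hh := eq_or_ne h h'
  · obtain ⟨P, hP, hgg'⟩ := hPi.2 g g' fun hg => hne (hg ▸ rfl)
    have hPne := Setoid.nonempty_of_mem_partition hPi.1 hP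
    refine ⟨P ×ˢ Sᶜ, Or.inl ⟨P, hP, rfl⟩, ?_⟩
    rw [distToSet_prod hG.preconnected hH hPne hSc, distToSet_prod hG.preconnected hH hPne hSc]
    exact fun h => hgg' (Nat.add_right_cancel h)
  · obtain ⟨s, hs, hhh'⟩ := hS h h' hh
    refine ⟨Set.univ ×ˢ {s}, Or.inr ⟨s, hs, rfl⟩, ?_⟩
    rwa [distToSet_univ_prod_singleton hG hH, distToSet_univ_prod_singleton hG hH]

theorem isResolvingPartition_range_singleton (hG : G.Preconnected) :
    IsResolvingPartition G (Set.range singleton) := by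
  refine ⟨Set.pairwiseDisjoint_range_singleton.isPartition_of_exists_of_ne_empty
    (fun v => ⟨{v}, Set.mem_range_self v, rfl⟩) ?_, fun u v huv => ⟨{u}, ⟨u, rfl⟩, ?_⟩⟩
  · rintro ⟨v, hv⟩
    exact Set.singleton_ne_empty v hv
  · rw [distToSet_singleton, distToSet_singleton, dist_self, ne_comm, Ne,
      (hG v u).dist_eq_zero_iff]
    exact huv.symm

theorem partitionDim_le_card {Pi : Finset (Set V)} (hPi : IsResolvingPartition G Pi) :
    partitionDim G ≤ Pi.card := by
  unfold partitionDim
  exact Nat.sInf_le ⟨Pi, rfl, hPi⟩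

theorem exists_isResolvingPartition_card_eq_partitionDim [Fintype V] (hG : G.Preconnected) :
    ∃ Pi : Finset (Set V), Pi.card = partitionDim G ∧ IsResolvingPartition G Pi := by
  classical
  have hne : {n | ∃ Pi : Finset (Set V), Pi.card = n ∧ IsResolvingPartition G Pi}.Nonempty :=
    ⟨_, Finset.univ.image singleton, rfl, by simpa using isResolvingPartition_range_singleton hG⟩
  exact Nat.sInf_mem hne

theorem partitionDim_boxProd_le [Fintype V] (hG : G.Connected) (hH : H.Preconnected)
    {S : Finset W} (hS : IsResolvingSet H S) (hSc : (S : Set W)ᶜ.Nonempty) :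
    partitionDim (G □ H) ≤ partitionDim G + S.card := by
  classical
  obtain ⟨Pi, hcard, hPi⟩ := exists_isResolvingPartition_card_eq_partitionDim hG.preconnected
  let Pi' := Pi.image (· ×ˢ (S : Set W)ᶜ) ∪ S.image fun s => (Set.univ : Set V) ×ˢ {s}
  have hPi' : (Pi' : Set (Set (V × W))) = prodPartition Pi S := by
    simp [Pi', prodPartition]
  calc partitionDim (G □ H) ≤ Pi'.card :=
        partitionDim_le_card (hPi' ▸ hPi.boxProd hG hH hS hSc)
    _ ≤ Pi.card + S.card :=
        (Finset.card_union_le _ _).trans (add_le_add Finset.card_image_le Finset.card_image_le)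
    _ = partitionDim G + S.card := by rw [hcard]

end Partition

theorem stmt_10 {V : Type*} [Fintype V] (G : SimpleGraph V) (hG : G.Connected)
    (n : ℕ) (hn : 3 ≤ n) :
    partitionDim (G.boxProd (SimpleGraph.cycleGraph n)) ≤ partitionDim G + 2 := by
  obtain ⟨m, rfl⟩ : ∃ m, n = m + 1 + 2 := ⟨n - 3, by omega⟩
  have hS : IsResolvingSet (cycleGraph (m + 1 + 2)) ↑({0, 1} : Finset (Fin (m + 1 + 2))) := by
    simpa using cycleGraph_isResolvingSet_zero_one (m + 1)
  have hSc : (↑({0, 1} : Finset (Fin (m + 1 + 2))) : Set (Fin (m + 1 + 2)))ᶜ.Nonempty :=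
    ⟨⟨2, by omega⟩, by simp [Fin.ext_iff]⟩
  calc partitionDim (G □ cycleGraph (m + 1 + 2))
      ≤ partitionDim G + ({0, 1} : Finset (Fin (m + 1 + 2))).card :=
        partitionDim_boxProd_le hG cycleGraph_preconnected hS hSc
    _ ≤ partitionDim G + 2 := by grw [Finset.card_le_two]
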